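/- For points u, v in the Poincaré ball with ‖u‖ = r₁, ‖v‖ = r₂, and angle π−θ at the origin between them, the excess f(r₁,r₂,θ) = d_H(u,O) + d_H(O,v) − d_H(u,v) equals 2·log((1+r₁)(1+r₂)/(√(r₁²+r₂²+2r₁r₂cos θ) + √(r₁²r₂²+2r₁r₂cos θ+1))). -/
import Mathlib


open RealInnerProductSpace

/-- Hyperbolic distance in the Poincaré ball model (logarithmic form). -/
noncomputable def dH {D : ℕ} (u v : EuclideanSpace ℝ (Fin D)) : ℝ :=
  2 * Real.log ((‖u - v‖ + Real.sqrt (‖u‖ ^ 2 * ‖v‖ ^ 2 - 2 * ⟪u, v⟫ + 1)) /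
    Real.sqrt ((1 - ‖u‖ ^ 2) * (1 - ‖v‖ ^ 2)))

theorem triangle_defect_formula {D : ℕ} (u v : EuclideanSpace ℝ (Fin D))
    (hu : ‖u‖ < 1) (hv : ‖v‖ < 1) (hu0 : u ≠ 0) (hv0 : v ≠ 0)
    (r₁ r₂ θ : ℝ) (hr₁ : ‖u‖ = r₁) (hr₂ : ‖v‖ = r₂)
    (hangle : InnerProductGeometry.angle u v = Real.pi - θ) :
    dH u 0 + dH 0 v - dH u v =
      2 * Real.log ((1 + r₁) * (1 + r₂) /
        (Real.sqrt (r₁ ^ 2 + r₂ ^ 2 + 2 * r₁ * r₂ * Real.cos θ) +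
         Real.sqrt (r₁ ^ 2 * r₂ ^ 2 + 2 * r₁ * r₂ * Real.cos θ + 1))) := by
  have hr₁0 : 0 < r₁ := hr₁ ▸ norm_pos_iff.2 hu0
  have hr₂0 : 0 < r₂ := hr₂ ▸ norm_pos_iff.2 hv0
  have hr₁1 : r₁ < 1 := hr₁ ▸ hu
  have hr₂1 : r₂ < 1 := hr₂ ▸ hv
  have hinner : ⟪u, v⟫ = -(r₁ * r₂ * Real.cos θ) := by
    rw [← InnerProductGeometry.cos_angle_mul_norm_mul_norm, hangle, Real.cos_pi_sub,
      hr₁, hr₂]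
    ring
  set A : ℝ := Real.sqrt (r₁ ^ 2 + r₂ ^ 2 + 2 * r₁ * r₂ * Real.cos θ) with hA
  set B : ℝ := Real.sqrt (r₁ ^ 2 * r₂ ^ 2 + 2 * r₁ * r₂ * Real.cos θ + 1) with hB
  have huv : ‖u - v‖ = A := by
    rw [hA, show r₁ ^ 2 + r₂ ^ 2 + 2 * r₁ * r₂ * Real.cos θ = ‖u - v‖ ^ 2 by
      rw [norm_sub_sq_real u v, hinner, hr₁, hr₂]; ring]
    exact (Real.sqrt_sq (norm_nonneg _)).symm
  have hBpos : 0 < B := by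
    apply Real.sqrt_pos.2
    have hrr : r₁ * r₂ < 1 := by nlinarith
    nlinarith [Real.neg_one_le_cos θ, mul_pos hr₁0 hr₂0, hrr]
  have hApos : 0 ≤ A := Real.sqrt_nonneg _
  have h1 : (0:ℝ) < 1 - r₁ ^ 2 := by nlinarith
  have h2 : (0:ℝ) < 1 - r₂ ^ 2 := by nlinarith
  have hs1 : (0:ℝ) < Real.sqrt (1 - r₁ ^ 2) := Real.sqrt_pos.2 h1
  have hs2 : (0:ℝ) < Real.sqrt (1 - r₂ ^ 2) := Real.sqrt_pos.2 h2
  have hd1 : dH u 0 = 2 * Real.log ((r₁ + 1) / Real.sqrt (1 - r₁ ^ 2)) := by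
    simp [dH, hr₁, Real.sqrt_one]
  have hd2 : dH 0 v = 2 * Real.log ((r₂ + 1) / Real.sqrt (1 - r₂ ^ 2)) := by
    simp [dH, hr₂, Real.sqrt_one, norm_sub_rev (0:EuclideanSpace ℝ (Fin D)) v]
  have hd3 : dH u v =
      2 * Real.log ((A + B) / (Real.sqrt (1 - r₁ ^ 2) * Real.sqrt (1 - r₂ ^ 2))) := by
    rw [dH, huv, hr₁, hr₂, hinner, show r₁ ^ 2 * r₂ ^ 2 - 2 * -(r₁ * r₂ * Real.cos θ) + 1 =
      r₁ ^ 2 * r₂ ^ 2 + 2 * r₁ * r₂ * Real.cos θ + 1 by ring, Real.sqrt_mul h1.le, ← hB]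
  rw [hd1, hd2, hd3]
  have hAB : 0 < A + B := by linarith
  have key : (1 + r₁) * (1 + r₂) / (A + B) =
      (r₁ + 1) / Real.sqrt (1 - r₁ ^ 2) * ((r₂ + 1) / Real.sqrt (1 - r₂ ^ 2)) /
        ((A + B) / (Real.sqrt (1 - r₁ ^ 2) * Real.sqrt (1 - r₂ ^ 2))) := by
    field_simp
    ring
  rw [key]
  have hlog : ∀ x y z : ℝ, 0 < x → 0 < y → 0 < z →
      2 * Real.log x + 2 * Real.log y - 2 * Real.log z = 2 * Real.log (x * y / z) := by
    intro x y z hx hy hz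
    rw [Real.log_div (by positivity) hz.ne', Real.log_mul hx.ne' hy.ne']
    ring
  exact hlog _ _ _ (by positivity) (by positivity) (by positivity)
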